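/- For any probability vectors p, q ∈ P_n and any integer i ≥ 0, half^(i)(p ∧ q) ⪯ half^(i)(p) ∧ half^(i)(q), where half^(i) is the i-fold iteration of the half operator. -/

import Mathlib

open Finset

/-- Majorization via prefix sums (vectors as functions ℕ → ℝ, padded with zeros). -/
def Maj (p q : ℕ → ℝ) : Prop :=
  ∀ i : ℕ, ∑ k ∈ Finset.range i, p k ≤ ∑ k ∈ Finset.range i, q k

/-- A probability vector of length `n`, sorted non-increasingly, zero beyond `n`. -/
def IsProbVec (n : ℕ) (p : ℕ → ℝ) : Prop :=
  (∀ i, 0 ≤ p i) ∧ (∀ i j : ℕ, i ≤ j → p j ≤ p i) ∧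
  (∑ k ∈ Finset.range n, p k = 1) ∧ (∀ i, n ≤ i → p i = 0)

/-- The greatest lower bound `p ∧ q` in the majorization lattice. -/
noncomputable def meet (p q : ℕ → ℝ) : ℕ → ℝ := fun i =>
  min (∑ k ∈ Finset.range (i + 1), p k) (∑ k ∈ Finset.range (i + 1), q k) -
  min (∑ k ∈ Finset.range i, p k) (∑ k ∈ Finset.range i, q k)

/-- Shannon entropy (base 2) of the first `n` components. -/
noncomputable def H2 (n : ℕ) (p : ℕ → ℝ) : ℝ :=
  ∑ k ∈ Finset.range n, -(p k * Real.logb 2 (p k))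

/-- Shannon entropy (base 2) of the entries of an `n × m` matrix. -/
noncomputable def Hmat (n m : ℕ) (M : ℕ → ℕ → ℝ) : ℝ :=
  ∑ i ∈ Finset.range n, ∑ j ∈ Finset.range m, -(M i j * Real.logb 2 (M i j))

/-- `M` is a coupling of `p` and `q`: nonnegative, row sums `p`, column sums `q`. -/
def IsCoupling (n m : ℕ) (p q : ℕ → ℝ) (M : ℕ → ℕ → ℝ) : Prop :=
  (∀ i j, 0 ≤ M i j) ∧ (∀ i < n, ∑ j ∈ Finset.range m, M i j = p i) ∧
  (∀ j < m, ∑ i ∈ Finset.range n, M i j = q j)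

/-- The `half` operator: duplicates and halves each component. -/
noncomputable def half (p : ℕ → ℝ) : ℕ → ℝ := fun i => p (i / 2) / 2

/-- Iterated `half` operator. -/
noncomputable def halfIter : ℕ → (ℕ → ℝ) → (ℕ → ℝ)
  | 0, p => p
  | (i + 1), p => half (halfIter i p)

/-- Iterated majorization meet of `p 0, p 1, …, p k`. -/
noncomputable def bigMeet (p : ℕ → ℕ → ℝ) : ℕ → (ℕ → ℝ)
  | 0 => p 0
  | (k + 1) => meet (bigMeet p k) (p (k + 1))

/-!
Prefix sums of `meet p q` are the pointwise minima of those of `p` and `q`, so `meet` is the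
greatest lower bound for `Maj`. Prefix sums of `half x` are those of `x` at even lengths and
averages of two consecutive ones at odd lengths, so `half`, and hence `halfIter i`, is monotone.
Thus `halfIter i (meet p q)` is a common lower bound of `halfIter i p` and `halfIter i q`.
-/

theorem sum_range_meet (p q : ℕ → ℝ) (i : ℕ) :
    ∑ k ∈ range i, meet p q k = min (∑ k ∈ range i, p k) (∑ k ∈ range i, q k) := by
  induction i with
  | zero => simp
  | succ m ih => rw [sum_range_succ, ih, meet]; ring

theorem meet_maj_left (p q : ℕ → ℝ) : Maj (meet p q) p := fun i => by
  rw [sum_range_meet]; exact min_le_left _ _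

theorem meet_maj_right (p q : ℕ → ℝ) : Maj (meet p q) q := fun i => by
  rw [sum_range_meet]; exact min_le_right _ _

theorem maj_meet {x p q : ℕ → ℝ} (hp : Maj x p) (hq : Maj x q) : Maj x (meet p q) := fun i => by
  rw [sum_range_meet]; exact le_min (hp i) (hq i)

theorem sum_range_two_mul_half (x : ℕ → ℝ) (m : ℕ) :
    ∑ k ∈ range (2 * m), half x k = ∑ k ∈ range m, x k := by
  induction m with
  | zero => simp
  | succ m ih =>
    rw [show 2 * (m + 1) = 2 * m + 1 + 1 by ring, sum_range_succ, sum_range_succ, ih,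
      sum_range_succ]
    simp only [half, show (2 * m) / 2 = m by omega, show (2 * m + 1) / 2 = m by omega]
    ring

theorem sum_range_two_mul_add_one_half (x : ℕ → ℝ) (m : ℕ) :
    ∑ k ∈ range (2 * m + 1), half x k =
      (∑ k ∈ range m, x k + ∑ k ∈ range (m + 1), x k) / 2 := by
  rw [sum_range_succ, sum_range_two_mul_half, sum_range_succ]
  simp only [half, show (2 * m) / 2 = m by omega]
  ring

theorem Maj.half {x y : ℕ → ℝ} (h : Maj x y) : Maj (half x) (half y) := by
  intro i
  obtain ⟨m, rfl | rfl⟩ := Nat.even_or_odd' i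
  · rw [sum_range_two_mul_half, sum_range_two_mul_half]
    exact h m
  · rw [sum_range_two_mul_add_one_half, sum_range_two_mul_add_one_half]
    linarith [h m, h (m + 1)]

theorem Maj.halfIter {x y : ℕ → ℝ} (h : Maj x y) (i : ℕ) :
    Maj (halfIter i x) (halfIter i y) := by
  induction i with
  | zero => exact h
  | succ m ih => exact ih.half

theorem stmt12_general (p q : ℕ → ℝ) (i : ℕ) :
    Maj (halfIter i (meet p q)) (meet (halfIter i p) (halfIter i q)) :=
  maj_meet ((meet_maj_left p q).halfIter i) ((meet_maj_right p q).halfIter i)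

theorem stmt12 (n : ℕ) (p q : ℕ → ℝ) (hp : IsProbVec n p) (hq : IsProbVec n q)
    (i : ℕ) : Maj (halfIter i (meet p q)) (meet (halfIter i p) (halfIter i q)) :=
  stmt12_general p q i
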